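/- Let M be a torsion-free n-space group with translation subgroup T, let α₀ = I, α₁, …, α_k ∈ M be coset representatives of T in M whose rotational parts A₀, …, A_k form the holonomy group of M, and let β be an affinity of Eⁿ normalizing M. Then β normalizes T, and the induced affinity β⋆ of Eⁿ/M has a fixed point if and only if for some i ∈ {0, …, k} the affinity of the torus Eⁿ/T induced by αᵢβ has a fixed point. -/

import Mathlib

/-- Euclidean n-space, as `Fin n → ℝ`. -/
abbrev Eu (n : ℕ) : Type := Fin n → ℝ

/-- An affinity `a + A` of Euclidean n-space: `x ↦ a + A x` with `A ∈ GL(n, ℝ)`. -/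
@[ext] structure Aff (n : ℕ) where
  a : Eu n
  A : Matrix.GeneralLinearGroup (Fin n) ℝ

namespace Aff

variable {n : ℕ}

/-- The matrix (linear) part of an affinity. -/
def mat (φ : Aff n) : Matrix (Fin n) (Fin n) ℝ := φ.A

instance : Mul (Aff n) := ⟨fun φ ψ => ⟨φ.a + φ.mat.mulVec ψ.a, φ.A * ψ.A⟩⟩
instance : One (Aff n) := ⟨⟨0, 1⟩⟩
instance : Inv (Aff n) :=
  ⟨fun φ => ⟨-(Matrix.mulVec ((φ.A⁻¹ : Matrix.GeneralLinearGroup (Fin n) ℝ) : Matrix (Fin n) (Fin n) ℝ) φ.a), φ.A⁻¹⟩⟩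

@[simp] lemma mul_a (φ ψ : Aff n) : (φ * ψ).a = φ.a + φ.mat.mulVec ψ.a := rfl
@[simp] lemma mul_A (φ ψ : Aff n) : (φ * ψ).A = φ.A * ψ.A := rfl
@[simp] lemma one_a : (1 : Aff n).a = 0 := rfl
@[simp] lemma one_A : (1 : Aff n).A = 1 := rfl
@[simp] lemma inv_A (φ : Aff n) : (φ⁻¹).A = φ.A⁻¹ := rfl
@[simp] lemma mat_mul (φ ψ : Aff n) : (φ * ψ).mat = φ.mat * ψ.mat := rfl
@[simp] lemma mat_one : (1 : Aff n).mat = 1 := rfl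

instance : Group (Aff n) where
  mul_assoc φ ψ χ := by
    ext1
    · simp [Matrix.mulVec_add, ← Matrix.mulVec_mulVec, add_assoc]
    · exact mul_assoc _ _ _
  one_mul φ := by
    ext1
    · simp
    · exact one_mul _
  mul_one φ := by
    ext1
    · simp
    · exact mul_one _
  inv_mul_cancel φ := by
    ext1
    · show (φ⁻¹).a + (φ⁻¹).mat.mulVec φ.a = (0 : Eu n)
      show -(Matrix.mulVec _ φ.a) + Matrix.mulVec _ φ.a = (0 : Eu n)
      exact neg_add_cancel _
    · exact inv_mul_cancel _

instance : SMul (Aff n) (Eu n) := ⟨fun φ x => φ.a + φ.mat.mulVec x⟩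

lemma smul_def (φ : Aff n) (x : Eu n) : φ • x = φ.a + φ.mat.mulVec x := rfl

instance : MulAction (Aff n) (Eu n) where
  one_smul x := by
    show (0 : Eu n) + (1 : Aff n).mat.mulVec x = x
    simp
  mul_smul φ ψ x := by
    show (φ * ψ).a + (φ * ψ).mat.mulVec x = φ.a + φ.mat.mulVec (ψ.a + ψ.mat.mulVec x)
    simp [Matrix.mulVec_add, ← Matrix.mulVec_mulVec, add_assoc]

/-- The translation `x ↦ v + x`, as an affinity. -/
def tr (v : Eu n) : Aff n := ⟨v, 1⟩

instance : TopologicalSpace (Aff n) :=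
  TopologicalSpace.induced (fun φ => (φ.a, φ.mat)) inferInstance

end Aff

/-- A diagonal matrix with `±1` diagonal entries, as an element of `GL(n,ℝ)`. -/
noncomputable def glDiag {n : ℕ} (v : Fin n → ℝ) (h : v * v = 1) :
    Matrix.GeneralLinearGroup (Fin n) ℝ :=
  ⟨Matrix.diagonal v, Matrix.diagonal v,
    by
      rw [Matrix.diagonal_mul_diagonal]
      rw [show (fun i => v i * v i) = (1 : Fin n → ℝ) from h]
      exact Matrix.diagonal_one,
    by
      rw [Matrix.diagonal_mul_diagonal]
      rw [show (fun i => v i * v i) = (1 : Fin n → ℝ) from h]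
      exact Matrix.diagonal_one⟩

/-- An n-space group, viewed inside the group of affinities of `Eⁿ`: a discrete
subgroup consisting of isometries (orthogonal matrix parts), with compact orbit
space. -/
def IsSpaceGroupA {n : ℕ} (M : Subgroup (Aff n)) : Prop :=
  (∀ g ∈ M, Aff.mat g ∈ Matrix.orthogonalGroup (Fin n) ℝ) ∧
  DiscreteTopology M ∧
  IsCompact (Set.univ : Set (Quotient (MulAction.orbitRel M (Eu n))))

/-- A monoid is torsion-free if no element other than `1` has finite order
(the definition `Monoid.IsTorsionFree` of the older Mathlib, since removed). -/
def Monoid.IsTorsionFree (G : Type*) [Monoid G] : Prop :=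
  ∀ g : G, g ≠ 1 → ¬IsOfFinOrder g

/-- Lemma 3: Let `M` be a torsion-free n-space group with translation subgroup `T`, let
`α₀ = I, α₁, …, α_k ∈ M` be coset representatives of `T` in `M` (whose matrix parts
then form the holonomy group of `M`), and let `β` be an affinity of `Eⁿ` normalizing
`M`.  Then `β` normalizes `T`, and the induced affinity `β⋆` of `Eⁿ/M` has a fixed
point iff for some `i` the affinity of the torus `Eⁿ/T` induced by `αᵢβ` has a fixed
point. -/
theorem fixed_point_criterion_via_torus {n : ℕ} (M T : Subgroup (Aff n))
    (hM : IsSpaceGroupA M) (htf : Monoid.IsTorsionFree M)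
    (hT : ∀ g : Aff n, g ∈ T ↔ (g ∈ M ∧ g.A = 1))
    (k : ℕ) (α : Fin (k + 1) → Aff n)
    (hα0 : α 0 = 1) (hαM : ∀ i, α i ∈ M)
    (hrep : ∀ g ∈ M, ∃! i : Fin (k + 1), ∃ τ ∈ T, g = τ * α i)
    (β : Aff n) (hβ : β ∈ Subgroup.normalizer (M : Set (Aff n))) :
    β ∈ Subgroup.normalizer (T : Set (Aff n)) ∧
    ((∃ x : Eu n, Quotient.mk (MulAction.orbitRel M (Eu n)) (β • x)
        = Quotient.mk (MulAction.orbitRel M (Eu n)) x) ↔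
      (∃ i : Fin (k + 1), ∃ x : Eu n,
        Quotient.mk (MulAction.orbitRel T (Eu n)) ((α i * β) • x)
          = Quotient.mk (MulAction.orbitRel T (Eu n)) x)) := by

  have hβinv : β⁻¹ ∈ Subgroup.normalizer (M : Set (Aff n)) := (Subgroup.normalizer ..).inv_mem hβ
  have hconjA : ∀ γ g : Aff n, (γ * g * γ⁻¹).A = 1 ↔ g.A = 1 := by
    intro γ g
    constructor
    · intro h
      have h2 : γ.A * g.A * γ.A⁻¹ = 1 := h
      have := congrArg (fun X => γ.A⁻¹ * X * γ.A) h2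
      simpa [mul_assoc] using this
    · intro h
      show γ.A * g.A * γ.A⁻¹ = 1
      simp [h]
  constructor
  · rw [Subgroup.mem_normalizer_iff]
    intro g
    rw [hT, hT]
    constructor
    · rintro ⟨hgM, hgA⟩
      exact ⟨(Subgroup.mem_normalizer_iff.mp hβ g).mp hgM, (hconjA β g).mpr hgA⟩
    · rintro ⟨hgM, hgA⟩
      exact ⟨(Subgroup.mem_normalizer_iff.mp hβ g).mpr hgM, (hconjA β g).mp hgA⟩
  · constructor
    · rintro ⟨x, hx⟩
      rw [Quotient.eq] at hx
      obtain ⟨m, hm⟩ := hx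
      -- hm : m • x = β • x, with m : M
      have hmM : ((m : Aff n))⁻¹ ∈ M := inv_mem m.2
      obtain ⟨i, ⟨τ, hτ, hdec⟩, _⟩ := hrep ((m : Aff n)⁻¹) hmM
      refine ⟨i, x, ?_⟩
      rw [Quotient.eq]
      refine ⟨⟨τ⁻¹, inv_mem hτ⟩, ?_⟩
      show (τ⁻¹ : Aff n) • x = (α i * β) • x
      have hm' : (m : Aff n) • x = β • x := hm
      have : ((m : Aff n)⁻¹) • (β • x) = x := by
        rw [← hm', ← mul_smul, inv_mul_cancel, one_smul]
      rw [hdec, mul_smul] at this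
      calc (τ⁻¹ : Aff n) • x = τ⁻¹ • (τ • ((α i) • (β • x))) := by rw [this]
        _ = (α i * β) • x := by rw [← mul_smul, inv_mul_cancel, one_smul, mul_smul]
    · rintro ⟨i, x, hx⟩
      rw [Quotient.eq] at hx
      obtain ⟨τ, hτ⟩ := hx
      -- hτ : τ • x = (α i * β) • x
      refine ⟨x, ?_⟩
      rw [Quotient.eq]
      refine ⟨⟨(α i)⁻¹ * τ, mul_mem (inv_mem (hαM i)) ((hT τ).mp τ.2).1⟩, ?_⟩
      show ((α i)⁻¹ * (τ : Aff n)) • x = β • x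
      have hτ' : (τ : Aff n) • x = (α i * β) • x := hτ
      rw [mul_smul, hτ', mul_smul, ← mul_smul, inv_mul_cancel, one_smul]
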